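/- arXiv:1807.08960 — 2 statements merged into one kernel-verified Lean document; each statement's English description precedes it below -/
import Mathlib

section
/- Define f : ℝ → ℝ by f(x) = 3 − x²/2 for 0 ≤ x ≤ 1, f(x) = (20 − 4x − x²)/6 for 1 ≤ x ≤ 14/5, and f(x) = 4(3−x)² for 14/5 ≤ x ≤ 3. Then (1/3)·∫₀³ f(x) dx ≤ 9/5. -/
/-! Split `[0, 3]` at the break points `1` and `14/5` and integrate each polynomial piece:
the three integrals are `17/6`, `639/250` and `4/375`, which add up to exactly `27/5`,
so the bound `9/5` is attained. -/

open Set intervalIntegral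

theorem eqOn_uIcc_of_forall_le_le {f g : ℝ → ℝ} {a b : ℝ} (hab : a ≤ b)
    (h : ∀ x, a ≤ x → x ≤ b → f x = g x) : EqOn f g (uIcc a b) := by
  rw [uIcc_of_le hab]
  exact fun x hx => h x hx.1 hx.2

theorem intervalIntegrable_of_forall_le_le {f g : ℝ → ℝ} {a b : ℝ} (hab : a ≤ b)
    (hg : Continuous g) (h : ∀ x, a ≤ x → x ≤ b → f x = g x) :
    IntervalIntegrable f MeasureTheory.volume a b :=
  (hg.continuousOn.congr (eqOn_uIcc_of_forall_le_le hab h)).intervalIntegrable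

theorem integral_three_sub_sq_div_two : ∫ x in (0:ℝ)..1, (3 - x ^ 2 / 2) = 17 / 6 := by
  norm_num [integral_sub, integral_div]

theorem integral_twenty_sub_four_mul_sub_sq_div_six :
    ∫ x in (1:ℝ)..(14/5), (20 - 4 * x - x ^ 2) / 6 = 639 / 250 := by
  rw [integral_div, integral_sub, integral_sub, integral_const_mul]
  · norm_num
  all_goals exact Continuous.intervalIntegrable (by fun_prop) _ _

theorem integral_four_mul_three_sub_sq : ∫ x in (14/5:ℝ)..3, 4 * (3 - x) ^ 2 = 4 / 375 := by
  norm_num [integral_const_mul, integral_comp_sub_left (fun x => x ^ 2)]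

theorem stmt_7 (f : ℝ → ℝ)
    (h1 : ∀ x : ℝ, 0 ≤ x → x ≤ 1 → f x = 3 - x^2/2)
    (h2 : ∀ x : ℝ, 1 ≤ x → x ≤ 14/5 → f x = (20 - 4*x - x^2) / 6)
    (h3 : ∀ x : ℝ, 14/5 ≤ x → x ≤ 3 → f x = 4*(3 - x)^2) :
    (1/3 : ℝ) * ∫ x in (0:ℝ)..3, f x ≤ 9/5 := by
  have e1 := eqOn_uIcc_of_forall_le_le (by norm_num) h1
  have e2 := eqOn_uIcc_of_forall_le_le (by norm_num) h2
  have e3 := eqOn_uIcc_of_forall_le_le (by norm_num) h3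
  have i1 := intervalIntegrable_of_forall_le_le (by norm_num) (by fun_prop) h1
  have i2 := intervalIntegrable_of_forall_le_le (by norm_num) (by fun_prop) h2
  have i3 := intervalIntegrable_of_forall_le_le (by norm_num) (by fun_prop) h3
  calc (1/3 : ℝ) * ∫ x in (0:ℝ)..3, f x
      = 1/3 * ((∫ x in (0:ℝ)..1, f x) + (∫ x in (1:ℝ)..(14/5), f x)
          + ∫ x in (14/5:ℝ)..3, f x) := by
        rw [integral_add_adjacent_intervals i1 i2, integral_add_adjacent_intervals (i1.trans i2) i3]
    _ = 1/3 * (17/6 + 639/250 + 4/375) := by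
        rw [integral_congr e1, integral_congr e2, integral_congr e3, integral_three_sub_sq_div_two,
          integral_twenty_sub_four_mul_sub_sq_div_six, integral_four_mul_three_sub_sq]
    _ ≤ 9/5 := by norm_num
end

section
/- Define f : ℝ → ℝ by f(x) = 3 − x²/2 for 0 ≤ x ≤ 2, f(x) = (44 − 8x − 4x²)/12 for 2 ≤ x ≤ 17/7, and f(x) = 4(5−2x)² for 17/7 ≤ x ≤ 5/2. Then (1/3)·∫₀^{5/2} f(x) dx = 103/63, and 103/63 < 5/3. -/
open intervalIntegral MeasureTheory

theorem integral_quadratic (a b p q r : ℝ) :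
    ∫ x in a..b, (p + q * x + r * x ^ 2) =
      (p * b + q * b ^ 2 / 2 + r * b ^ 3 / 3) - (p * a + q * a ^ 2 / 2 + r * a ^ 3 / 3) := by
  refine integral_eq_sub_of_hasDerivAt (f := fun x => p * x + q * x ^ 2 / 2 + r * x ^ 3 / 3)
    (fun x _ => ?_)
    (Continuous.intervalIntegrable (u := fun x => p + q * x + r * x ^ 2) (by fun_prop) a b)
  convert (((hasDerivAt_id x).const_mul p).add (((hasDerivAt_pow 2 x).const_mul q).div_const 2)).add
    (((hasDerivAt_pow 3 x).const_mul r).div_const 3) using 1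
  · rfl
  · push_cast; ring

section EqQuadraticOnIcc

variable {f : ℝ → ℝ} {a b p q r : ℝ}

theorem intervalIntegrable_of_eq_quadratic (hab : a ≤ b)
    (hf : ∀ x, a ≤ x → x ≤ b → f x = p + q * x + r * x ^ 2) :
    IntervalIntegrable f volume a b := by
  refine (Continuous.intervalIntegrable (u := fun x => p + q * x + r * x ^ 2) (by fun_prop) a b).congr
    fun x hx => ?_
  rw [Set.uIoc_of_le hab] at hx
  exact (hf x hx.1.le hx.2).symm

theorem integral_of_eq_quadratic (hab : a ≤ b)
    (hf : ∀ x, a ≤ x → x ≤ b → f x = p + q * x + r * x ^ 2) :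
    ∫ x in a..b, f x =
      (p * b + q * b ^ 2 / 2 + r * b ^ 3 / 3) - (p * a + q * a ^ 2 / 2 + r * a ^ 3 / 3) := by
  rw [← integral_quadratic]
  refine integral_congr fun x hx => ?_
  rw [Set.uIcc_of_le hab] at hx
  exact hf x hx.1 hx.2

end EqQuadraticOnIcc

theorem stmt_11 (f : ℝ → ℝ)
    (h1 : ∀ x : ℝ, 0 ≤ x → x ≤ 2 → f x = 3 - x^2/2)
    (h2 : ∀ x : ℝ, 2 ≤ x → x ≤ 17/7 → f x = (44 - 8*x - 4*x^2) / 12)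
    (h3 : ∀ x : ℝ, 17/7 ≤ x → x ≤ 5/2 → f x = 4*(5 - 2*x)^2) :
    (1/3 : ℝ) * ∫ x in (0:ℝ)..(5/2), f x = 103/63 ∧ (103/63 : ℝ) < 5/3 := by
  have q1 : ∀ x : ℝ, 0 ≤ x → x ≤ 2 → f x = 3 + 0 * x + (-1 / 2) * x ^ 2 :=
    fun x h h' => by rw [h1 x h h']; ring
  have q2 : ∀ x : ℝ, 2 ≤ x → x ≤ 17/7 → f x = 11 / 3 + (-2 / 3) * x + (-1 / 3) * x ^ 2 :=
    fun x h h' => by rw [h2 x h h']; ring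
  have q3 : ∀ x : ℝ, 17/7 ≤ x → x ≤ 5/2 → f x = 100 + (-80) * x + 16 * x ^ 2 :=
    fun x h h' => by rw [h3 x h h']; ring
  have i1 := intervalIntegrable_of_eq_quadratic (by norm_num) q1
  have i2 := intervalIntegrable_of_eq_quadratic (by norm_num) q2
  have i3 := intervalIntegrable_of_eq_quadratic (by norm_num) q3
  refine ⟨?_, by norm_num⟩
  rw [← integral_add_adjacent_intervals (i1.trans i2) i3, ← integral_add_adjacent_intervals i1 i2,
    integral_of_eq_quadratic (by norm_num) q1, integral_of_eq_quadratic (by norm_num) q2,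
    integral_of_eq_quadratic (by norm_num) q3]
  norm_num
end
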